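/- arXiv:1601.03094 — 3 statements merged into one kernel-verified Lean document; each statement's English description precedes it below -/
import Mathlib

section
/- For every admissible K, the natural distance D_nat is a metric on configurations up to relabeling: for all configurations A, B, C, (i) D_nat(A, B) ≥ 0; (ii) D_nat(A, B) = 0 if and only if there exists a permutation σ ∈ Π with B_{σ(i)}(t) = A_i(t) for all i and t; (iii) D_nat(A, B) = D_nat(B, A); (iv) D_nat(A, C) ≤ D_nat(A, B) + D_nat(B, C). -/
open scoped ENNReal

/-- The extended distance `d⁺` on `X⁺ = X ∪ {*}`, modeled as `Option X`. -/
noncomputable def dplus {X : Type*} [MetricSpace X] (M : ℝ) : Option X → Option X → ℝ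
  | some a, some b => min (2 * M) (dist a b)
  | some _, none => M
  | none, some _ => M
  | none, none => 0

/-- The natural distance `D_nat(A,B)`: the minimum over sequences of permutations
`Σ ∈ Π^T` of `K(Σ) + ∑_t ∑_i d⁺(A_i(t), B_{σ(t)(i)}(t))`. -/
noncomputable def Dnat {X : Type*} [MetricSpace X] (M : ℝ) {m T : ℕ}
    (K : (Fin T → Equiv.Perm (Fin m)) → ℝ≥0∞)
    (A B : Fin m → Fin T → Option X) : ℝ≥0∞ :=
  ⨅ S : Fin T → Equiv.Perm (Fin m),
    K S + ENNReal.ofReal (∑ t, ∑ i, dplus M (A i t) (B (S t i) t))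

/-! The infimum defining `D_nat` runs over the finite set `Π^T`, so it is attained. Each metric
axiom then combines the matching axiom of `K` with a property of the cost of a fixed relabeling `Σ`:
the cost of `Σ⁻¹` from `B` to `A` equals that of `Σ` from `A` to `B`, and the cost of `Σ' ∘ Σ` from
`A` to `C` is at most the sum of the two costs, because `d⁺` satisfies the triangle inequality pointwise. -/

lemma min_add_le_min_add_min {c x y : ℝ} (hc : 0 ≤ c) (hx : 0 ≤ x) (hy : 0 ≤ y) :
    min c (x + y) ≤ min c x + min c y := by
  simp only [min_def]
  split_ifs <;> linarith

section dplus

variable {X : Type*} [MetricSpace X] {M : ℝ}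

lemma dplus_nonneg (hM : 0 ≤ M) : ∀ x y : Option X, 0 ≤ dplus M x y
  | some _, some _ => le_min (by linarith) dist_nonneg
  | some _, none => hM
  | none, some _ => hM
  | none, none => le_rfl

lemma dplus_comm (M : ℝ) : ∀ x y : Option X, dplus M x y = dplus M y x
  | some a, some b => by simp only [dplus, dist_comm]
  | some _, none => rfl
  | none, some _ => rfl
  | none, none => rfl

lemma dplus_triangle (hM : 0 ≤ M) : ∀ x y z : Option X, dplus M x z ≤ dplus M x y + dplus M y z
  | some a, some b, some c =>
    calc min (2 * M) (dist a c) ≤ min (2 * M) (dist a b + dist b c) :=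
          min_le_min_left _ (dist_triangle a b c)
      _ ≤ min (2 * M) (dist a b) + min (2 * M) (dist b c) :=
          min_add_le_min_add_min (by linarith) dist_nonneg dist_nonneg
  | some a, some b, none => by
      simpa only [dplus, le_add_iff_nonneg_left] using dplus_nonneg hM (some a) (some b)
  | some a, none, some c => by
      simp only [dplus]; linarith [min_le_left (2 * M) (dist a c)]
  | some _, none, none => by simp only [dplus, add_zero, le_refl]
  | none, some b, some c => by
      simpa only [dplus, le_add_iff_nonneg_right] using dplus_nonneg hM (some b) (some c)
  | none, some _, none => by simp only [dplus]; linarith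
  | none, none, some _ => by simp only [dplus, zero_add, le_refl]
  | none, none, none => by simp only [dplus, add_zero, le_refl]

lemma dplus_eq_zero_iff (hM : 0 < M) : ∀ {x y : Option X}, dplus M x y = 0 ↔ x = y
  | some a, some b => by
      have h2M : 0 < 2 * M := by linarith
      simp only [dplus, Option.some.injEq, ← dist_eq_zero (x := a)]
      constructor
      · intro h
        rcases min_choice (2 * M) (dist a b) with hmin | hmin <;> rw [hmin] at h
        · linarith
        · exact h
      · intro h; rw [h, min_eq_right h2M.le]
  | some _, none => by simp only [dplus, reduceCtorEq, iff_false]; exact hM.ne'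
  | none, some _ => by simp only [dplus, reduceCtorEq, iff_false]; exact hM.ne'
  | none, none => by simp only [dplus]

end dplus

section matchingCost

variable {X : Type*} [MetricSpace X] {M : ℝ} {ι τ : Type*} [Fintype ι] [Fintype τ]

noncomputable def matchingCost (M : ℝ) (A B : ι → τ → Option X) (S : τ → Equiv.Perm ι) : ℝ :=
  ∑ t, ∑ i, dplus M (A i t) (B (S t i) t)

lemma matchingCost_nonneg (hM : 0 ≤ M) (A B : ι → τ → Option X) (S : τ → Equiv.Perm ι) :
    0 ≤ matchingCost M A B S :=
  Finset.sum_nonneg fun _ _ => Finset.sum_nonneg fun _ _ => dplus_nonneg hM _ _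

lemma matchingCost_eq_zero_iff (hM : 0 < M) {A B : ι → τ → Option X} {S : τ → Equiv.Perm ι} :
    matchingCost M A B S = 0 ↔ ∀ i t, B (S t i) t = A i t := by
  have hnn : ∀ t i, 0 ≤ dplus M (A i t) (B (S t i) t) := fun _ _ => dplus_nonneg hM.le _ _
  rw [matchingCost, Finset.sum_eq_zero_iff_of_nonneg
    fun t _ => Finset.sum_nonneg fun i _ => hnn t i]
  simp only [Finset.mem_univ, true_implies,
    Finset.sum_eq_zero_iff_of_nonneg fun i _ => hnn _ i, dplus_eq_zero_iff hM, eq_comm]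
  exact forall_comm

lemma matchingCost_inv (M : ℝ) (A B : ι → τ → Option X) (S : τ → Equiv.Perm ι) :
    matchingCost M A B (fun t => (S t)⁻¹) = matchingCost M B A S := by
  refine Finset.sum_congr rfl fun t _ => ?_
  rw [← Equiv.sum_comp (S t)]
  refine Finset.sum_congr rfl fun i _ => ?_
  simp only [Equiv.Perm.coe_inv, Equiv.symm_apply_apply, dplus_comm]

lemma matchingCost_mul_le (hM : 0 ≤ M) (A B C : ι → τ → Option X) (S S' : τ → Equiv.Perm ι) :
    matchingCost M A C (fun t => S' t * S t) ≤ matchingCost M A B S + matchingCost M B C S' := by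
  rw [matchingCost, matchingCost, matchingCost, ← Finset.sum_add_distrib]
  refine Finset.sum_le_sum fun t _ => ?_
  rw [← Equiv.sum_comp (S t) (fun j => dplus M (B j t) (C (S' t j) t)),
    ← Finset.sum_add_distrib]
  exact Finset.sum_le_sum fun i _ => dplus_triangle hM _ _ _

end matchingCost

section Dnat

variable {X : Type*} [MetricSpace X] {M : ℝ} {m T : ℕ} {K : (Fin T → Equiv.Perm (Fin m)) → ℝ≥0∞}

lemma Dnat_eq_iInf (A B : Fin m → Fin T → Option X) :
    Dnat M K A B = ⨅ S, K S + ENNReal.ofReal (matchingCost M A B S) := rfl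

lemma Dnat_le (A B : Fin m → Fin T → Option X) (S : Fin T → Equiv.Perm (Fin m)) :
    Dnat M K A B ≤ K S + ENNReal.ofReal (matchingCost M A B S) :=
  (Dnat_eq_iInf A B).trans_le (iInf_le _ S)

lemma exists_Dnat_eq (A B : Fin m → Fin T → Option X) :
    ∃ S, Dnat M K A B = K S + ENNReal.ofReal (matchingCost M A B S) := by
  obtain ⟨S, hS⟩ := exists_eq_ciInf_of_finite
    (f := fun S => K S + ENNReal.ofReal (matchingCost M A B S))
  exact ⟨S, (Dnat_eq_iInf A B).trans hS.symm⟩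

lemma Dnat_eq_zero_iff (hM : 0 < M) (hK0 : ∀ S, K S = 0 ↔ ∃ σ : Equiv.Perm (Fin m), S = fun _ => σ)
    {A B : Fin m → Fin T → Option X} :
    Dnat M K A B = 0 ↔ ∃ σ : Equiv.Perm (Fin m), ∀ i t, B (σ i) t = A i t := by
  constructor
  · intro h
    obtain ⟨S, hS⟩ := exists_Dnat_eq (M := M) (K := K) A B
    obtain ⟨hKS, hcost⟩ := add_eq_zero.1 (hS ▸ h)
    obtain ⟨σ, rfl⟩ := (hK0 S).1 hKS
    have hcost0 : matchingCost M A B (fun _ => σ) = 0 :=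
      le_antisymm (ENNReal.ofReal_eq_zero.1 hcost) (matchingCost_nonneg hM.le A B _)
    exact ⟨σ, (matchingCost_eq_zero_iff hM).1 hcost0⟩
  · rintro ⟨σ, hσ⟩
    refine nonpos_iff_eq_zero.1 ((Dnat_le A B fun _ => σ).trans_eq ?_)
    rw [(hK0 _).2 ⟨σ, rfl⟩, (matchingCost_eq_zero_iff hM).2 hσ, ENNReal.ofReal_zero, add_zero]

lemma Dnat_comm (hKinv : ∀ S, K (fun t => (S t)⁻¹) = K S) (A B : Fin m → Fin T → Option X) :
    Dnat M K A B = Dnat M K B A := by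
  have hle : ∀ A B : Fin m → Fin T → Option X, Dnat M K A B ≤ Dnat M K B A := fun A B => by
    rw [Dnat_eq_iInf B A]
    exact le_iInf fun S => (Dnat_le A B fun t => (S t)⁻¹).trans_eq (by rw [hKinv, matchingCost_inv])
  exact le_antisymm (hle A B) (hle B A)

lemma Dnat_triangle (hM : 0 ≤ M) (hKcomp : ∀ S S', K (fun t => S t * S' t) ≤ K S + K S')
    (A B C : Fin m → Fin T → Option X) :
    Dnat M K A C ≤ Dnat M K A B + Dnat M K B C := by
  obtain ⟨S, hS⟩ := exists_Dnat_eq (M := M) (K := K) A B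
  obtain ⟨S', hS'⟩ := exists_Dnat_eq (M := M) (K := K) B C
  calc Dnat M K A C
      ≤ K (fun t => S' t * S t) + ENNReal.ofReal (matchingCost M A C fun t => S' t * S t) :=
        Dnat_le A C _
    _ ≤ (K S' + K S) + (ENNReal.ofReal (matchingCost M A B S) +
          ENNReal.ofReal (matchingCost M B C S')) := by
        gcongr
        · exact hKcomp S' S
        · rw [← ENNReal.ofReal_add (matchingCost_nonneg hM A B S) (matchingCost_nonneg hM B C S')]
          exact ENNReal.ofReal_le_ofReal (matchingCost_mul_le hM A B C S S')
    _ = Dnat M K A B + Dnat M K B C := by rw [hS, hS']; ring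

end Dnat

theorem Dnat_isMetric_general {X : Type*} [MetricSpace X] (M : ℝ) (hM : 0 < M)
    {m T : ℕ}
    (K : (Fin T → Equiv.Perm (Fin m)) → ℝ≥0∞)
    (hK0 : ∀ S, K S = 0 ↔ ∃ σ : Equiv.Perm (Fin m), S = fun _ => σ)
    (hKinv : ∀ S, K (fun t => (S t)⁻¹) = K S)
    (hKcomp : ∀ S S', K (fun t => S t * S' t) ≤ K S + K S')
    (A B C : Fin m → Fin T → Option X) :
    0 ≤ Dnat M K A B ∧
    (Dnat M K A B = 0 ↔ ∃ σ : Equiv.Perm (Fin m), ∀ i t, B (σ i) t = A i t) ∧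
    Dnat M K A B = Dnat M K B A ∧
    Dnat M K A C ≤ Dnat M K A B + Dnat M K B C :=
  ⟨zero_le, Dnat_eq_zero_iff hM hK0, Dnat_comm hKinv A B, Dnat_triangle hM.le hKcomp A B C⟩

/-- For every admissible `K`, the natural distance `D_nat` is a metric on configurations
up to relabeling. -/
theorem Dnat_isMetric {X : Type*} [MetricSpace X] (M : ℝ) (hM : 0 < M)
    {m T : ℕ} (hm : 1 ≤ m) (hT : 1 ≤ T)
    (K : (Fin T → Equiv.Perm (Fin m)) → ℝ≥0∞)
    (hK0 : ∀ S, K S = 0 ↔ ∃ σ : Equiv.Perm (Fin m), S = fun _ => σ)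
    (hKinv : ∀ S, K (fun t => (S t)⁻¹) = K S)
    (hKcomp : ∀ S S', K (fun t => S t * S' t) ≤ K S + K S')
    (A B C : Fin m → Fin T → Option X) :
    0 ≤ Dnat M K A B ∧
    (Dnat M K A B = 0 ↔ ∃ σ : Equiv.Perm (Fin m), ∀ i t, B (σ i) t = A i t) ∧
    Dnat M K A B = Dnat M K B A ∧
    Dnat M K A C ≤ Dnat M K A B + Dnat M K B C :=
  Dnat_isMetric_general M hM K hK0 hKinv hKcomp A B C
end

section
/- Let W₁, W₂ ∈ 𝒫 and let D₁, D₂, D₃ be m × m real matrices satisfying (D₃)_{ij} ≤ (D₁)_{ik} + (D₂)_{kj} for every i, j, k. Then tr((W₁W₂)ᵀ D₃) ≤ tr(W₁ᵀ D₁) + tr(W₂ᵀ D₂). -/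
/-!
The weights `W₁ i k * W₂ k j` glue `W₁` and `W₂` along the middle index: summing out `j`
(row sums of `W₂` are `1`) leaves `W₁ i k`, summing out `i` (column sums of `W₁` are `1`)
leaves `W₂ k j`, and summing out `k` gives `(W₁ * W₂) i j`. Integrating the pointwise triangle
inequality `D₃ i j ≤ D₁ i k + D₂ k j` against these nonnegative weights gives the claim.
-/

open scoped Matrix

/-- `𝒫`: the set of `m × m` doubly stochastic real matrices. -/
def doublyStoch (m : ℕ) : Set (Matrix (Fin m) (Fin m) ℝ) :=
  {W | (∀ i j, 0 ≤ W i j) ∧ (∀ i, ∑ j, W i j = 1) ∧ (∀ j, ∑ i, W i j = 1)}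

open Finset

namespace Matrix

variable {l m n R : Type*} [Fintype l] [Fintype m] [Fintype n]

section CommSemiring

variable [CommSemiring R]

theorem trace_transpose_mul_eq_sum (A B : Matrix m n R) :
    trace (Aᵀ * B) = ∑ i, ∑ j, A i j * B i j := by
  simp only [trace, diag, mul_apply, transpose_apply]
  exact sum_comm

theorem trace_transpose_mul_mul_eq_sum (W₁ : Matrix l m R) (W₂ : Matrix m n R)
    (D : Matrix l n R) :
    trace ((W₁ * W₂)ᵀ * D) = ∑ i, ∑ k, ∑ j, W₁ i k * W₂ k j * D i j := by
  rw [trace_transpose_mul_eq_sum]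
  refine sum_congr rfl fun i _ => ?_
  simp only [mul_apply, sum_mul]
  exact sum_comm

theorem sum_mul_mul_eq_trace_of_row_sum_eq_one (W₁ : Matrix l m R) {W₂ : Matrix m n R}
    (hW₂ : ∀ k, ∑ j, W₂ k j = 1) (D : Matrix l m R) :
    ∑ i, ∑ k, ∑ j, W₁ i k * W₂ k j * D i k = trace (W₁ᵀ * D) := by
  rw [trace_transpose_mul_eq_sum]
  refine sum_congr rfl fun i _ => sum_congr rfl fun k _ => ?_
  calc ∑ j, W₁ i k * W₂ k j * D i k = W₁ i k * D i k * ∑ j, W₂ k j := by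
        rw [mul_sum]; exact sum_congr rfl fun j _ => by ring
    _ = W₁ i k * D i k := by rw [hW₂, mul_one]

theorem sum_mul_mul_eq_trace_of_col_sum_eq_one {W₁ : Matrix l m R} (W₂ : Matrix m n R)
    (hW₁ : ∀ k, ∑ i, W₁ i k = 1) (D : Matrix m n R) :
    ∑ i, ∑ k, ∑ j, W₁ i k * W₂ k j * D k j = trace (W₂ᵀ * D) := by
  rw [trace_transpose_mul_eq_sum, sum_comm]
  refine sum_congr rfl fun k _ => ?_
  rw [sum_comm]
  refine sum_congr rfl fun j _ => ?_
  calc ∑ i, W₁ i k * W₂ k j * D k j = W₂ k j * D k j * ∑ i, W₁ i k := by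
        rw [mul_sum]; exact sum_congr rfl fun i _ => by ring
    _ = W₂ k j * D k j := by rw [hW₁, mul_one]

end CommSemiring

theorem trace_transpose_mul_mul_le_add [CommSemiring R] [PartialOrder R] [IsOrderedRing R]
    {W₁ : Matrix l m R} {W₂ : Matrix m n R}
    (hW₁_nonneg : ∀ i k, 0 ≤ W₁ i k) (hW₁_col : ∀ k, ∑ i, W₁ i k = 1)
    (hW₂_nonneg : ∀ k j, 0 ≤ W₂ k j) (hW₂_row : ∀ k, ∑ j, W₂ k j = 1)
    {D₁ : Matrix l m R} {D₂ : Matrix m n R} {D₃ : Matrix l n R}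
    (h : ∀ i j k, D₃ i j ≤ D₁ i k + D₂ k j) :
    trace ((W₁ * W₂)ᵀ * D₃) ≤ trace (W₁ᵀ * D₁) + trace (W₂ᵀ * D₂) := by
  rw [trace_transpose_mul_mul_eq_sum, ← sum_mul_mul_eq_trace_of_row_sum_eq_one W₁ hW₂_row,
    ← sum_mul_mul_eq_trace_of_col_sum_eq_one W₂ hW₁_col]
  simp only [← sum_add_distrib, ← mul_add]
  gcongr with i _ k _ j _
  · exact mul_nonneg (hW₁_nonneg i k) (hW₂_nonneg k j)
  · exact h i j k

end Matrix

/-- If `W₁, W₂` are doubly stochastic and `(D₃)_{ij} ≤ (D₁)_{ik} + (D₂)_{kj}` for all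
`i, j, k`, then `tr((W₁W₂)ᵀ D₃) ≤ tr(W₁ᵀ D₁) + tr(W₂ᵀ D₂)`. -/
theorem trace_triangle_doublyStoch {m : ℕ}
    (W₁ W₂ : Matrix (Fin m) (Fin m) ℝ)
    (hW₁ : W₁ ∈ doublyStoch m) (hW₂ : W₂ ∈ doublyStoch m)
    (D₁ D₂ D₃ : Matrix (Fin m) (Fin m) ℝ)
    (h : ∀ i j k, D₃ i j ≤ D₁ i k + D₂ k j) :
    Matrix.trace ((W₁ * W₂)ᵀ * D₃)
      ≤ Matrix.trace (W₁ᵀ * D₁) + Matrix.trace (W₂ᵀ * D₂) :=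
  Matrix.trace_transpose_mul_mul_le_add hW₁.1 hW₁.2.2 hW₂.1 hW₂.2.1 h
end

section
/- Let ‖·‖₁ denote the induced matrix 1-norm ‖M‖₁ = max_j Σ_i |M_{ij}|. Then D_comp(A, B) computed with ‖·‖ = ‖·‖₁ equals the optimal value of the following linear program in the variables (W(1), …, W(T)) ∈ (ℝ^{m×m})^T, (e_1, …, e_{T−1}) ∈ ℝ^{T−1}, and (h(1), …, h(T−1)) ∈ (ℝ^{m×m})^{T−1}: minimize Σ_{t=1}^{T−1} e_t + Σ_{t=1}^{T} tr(W(t)ᵀ D^{AB}(t)) subject to, for all admissible indices i, j, t: W(t) has nonnegative entries with all row sums and column sums equal to 1; W(t+1)_{ij} − W(t)_{ij} ≤ h(t)_{ij}; −W(t+1)_{ij} + W(t)_{ij} ≤ h(t)_{ij}; and Σ_i h(t)_{ij} ≤ e_t for all j, t. -/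
open scoped Matrix

/-- The pairwise-distance matrix `D^{AB}(t)_{ij} = d⁺(A_i(t), B_j(t))`. -/
noncomputable def distMat {X : Type*} [MetricSpace X] (M : ℝ) {m T : ℕ}
    (A B : Fin m → Fin T → Option X) (t : Fin T) : Matrix (Fin m) (Fin m) ℝ :=
  Matrix.of fun i j => dplus M (A i t) (B j t)

/-- The natural computable distance `D_comp(A, B)` with matrix norm `N`. -/
noncomputable def Dcomp {X : Type*} [MetricSpace X] (M : ℝ) {m T : ℕ}
    (N : Matrix (Fin m) (Fin m) ℝ → ℝ) (A B : Fin m → Fin T → Option X) : ℝ :=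
  sInf {v | ∃ W : Fin T → Matrix (Fin m) (Fin m) ℝ, (∀ t, W t ∈ doublyStoch m) ∧
    v = (∑ t : Fin (T - 1),
          N (W ⟨t.1 + 1, by have := t.2; omega⟩ - W ⟨t.1, by have := t.2; omega⟩)) +
        ∑ t, Matrix.trace ((W t)ᵀ * distMat M A B t)}

/-- The induced matrix 1-norm `‖A‖₁ = max_j ∑_i |A_{ij}|`. -/
noncomputable def oneNorm {m : ℕ} (A : Matrix (Fin m) (Fin m) ℝ) : ℝ :=
  ⨆ j : Fin m, ∑ i, |A i j|

theorem oneNorm_le_iff {m : ℕ} [Nonempty (Fin m)] (D : Matrix (Fin m) (Fin m) ℝ) (e : ℝ) :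
    oneNorm D ≤ e ↔
      ∃ H : Matrix (Fin m) (Fin m) ℝ, (∀ i j, |D i j| ≤ H i j) ∧ ∀ j, ∑ i, H i j ≤ e := by
  refine ⟨fun hD => ⟨D.map abs, fun _ _ => le_rfl, fun j => ?_⟩, ?_⟩
  · exact (le_ciSup (Set.finite_range fun j => ∑ i, |D i j|).bddAbove j).trans hD
  · rintro ⟨H, hDH, hH⟩
    exact ciSup_le fun j => (Finset.sum_le_sum fun i _ => hDH i j).trans (hH j)

theorem abs_sub_le_iff_sub_le_and_neg_add_le {a b c : ℝ} :
    |a - b| ≤ c ↔ a - b ≤ c ∧ -a + b ≤ c := by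
  rw [abs_sub_le_iff, neg_add_eq_sub]

/-- `D_comp` computed with the matrix 1-norm equals the optimal value of the linear
program in the variables `(W(t))_t`, `(e_t)_t`, `(h(t))_t`: minimize
`∑_t e_t + ∑_t tr(W(t)ᵀ D^{AB}(t))` subject to `W(t)` doubly stochastic,
`W(t+1)_{ij} − W(t)_{ij} ≤ h(t)_{ij}`, `−W(t+1)_{ij} + W(t)_{ij} ≤ h(t)_{ij}` and
`∑_i h(t)_{ij} ≤ e_t`. -/
theorem Dcomp_oneNorm_eq_LP {X : Type*} [MetricSpace X] (M : ℝ)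
    {m T : ℕ} (hm : 1 ≤ m)
    (A B : Fin m → Fin T → Option X) :
    Dcomp M oneNorm A B =
      sInf {v | ∃ (W : Fin T → Matrix (Fin m) (Fin m) ℝ)
        (e : Fin (T - 1) → ℝ) (h : Fin (T - 1) → Matrix (Fin m) (Fin m) ℝ),
        (∀ t, W t ∈ doublyStoch m) ∧
        (∀ (t : Fin (T - 1)) (i j : Fin m),
          W ⟨t.1 + 1, by have := t.2; omega⟩ i j - W ⟨t.1, by have := t.2; omega⟩ i j
            ≤ h t i j) ∧
        (∀ (t : Fin (T - 1)) (i j : Fin m),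
          -(W ⟨t.1 + 1, by have := t.2; omega⟩ i j) + W ⟨t.1, by have := t.2; omega⟩ i j
            ≤ h t i j) ∧
        (∀ (t : Fin (T - 1)) (j : Fin m), ∑ i, h t i j ≤ e t) ∧
        v = (∑ t, e t) + ∑ t, Matrix.trace ((W t)ᵀ * distMat M A B t)} := by
  have : Nonempty (Fin m) := ⟨⟨0, hm⟩⟩
  apply csInf_eq_csInf_of_forall_exists_le
  · rintro _ ⟨W, hW, rfl⟩
    choose H hDH hH using fun t : Fin (T - 1) => (oneNorm_le_iff
      (W ⟨t.1 + 1, by have := t.2; omega⟩ - W ⟨t.1, by have := t.2; omega⟩) _).1 le_rfl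
    have hincr := fun t i j => abs_sub_le_iff_sub_le_and_neg_add_le.1 (hDH t i j)
    exact ⟨_, ⟨W, _, H, hW, fun t i j => (hincr t i j).1, fun t i j => (hincr t i j).2, hH, rfl⟩,
      le_rfl⟩
  · rintro _ ⟨W, e, h, hW, hup, hdown, hcol, rfl⟩
    refine ⟨_, ⟨W, hW, rfl⟩, ?_⟩
    gcongr with t
    exact (oneNorm_le_iff _ _).2 ⟨h t, fun i j =>
      abs_sub_le_iff_sub_le_and_neg_add_le.2 ⟨hup t i j, hdown t i j⟩, hcol t⟩
end
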